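/- Let λ = (5, 3), n = 8, and x = x_λ. The set of complete isotropic flags F_• in (V_λ, β_λ) lying in the Springer fiber of x and satisfying F_2 = x^{−1}(F_0) (i.e., F_2 = ker x = ⟨e_1, f_1⟩), F_3 = ⟨e_1, e_2, f_1⟩, and F_4 = ⟨e_1, e_2, f_1, f_2 − e_3⟩ is exactly the set of flags with F_1 an arbitrary one-dimensional subspace of ⟨e_1, f_1⟩, F_2 = ⟨e_1, f_1⟩, F_3 = ⟨e_1, e_2, f_1⟩, F_4 = ⟨e_1, e_2, f_1, f_2 − e_3⟩, and F_5, F_6, F_7 determined by F_{8−i} = F_i^⊥; in particular F_• ↦ F_1 is a bijection from this set onto the set of one-dimensional subspaces of ⟨e_1, f_1⟩, hence onto ℙ(ℂ²). -/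

import Mathlib

open Complex Submodule

noncomputable section

/-- `V p q` is the vector space `ℂ^(p+q)` with coordinates indexed by `Fin p ⊕ Fin q`,
corresponding to the basis `e_1, …, e_p, f_1, …, f_q` of `V_λ` for `λ = (p, q)`. -/
abbrev V (p q : ℕ) := (Fin p ⊕ Fin q) → ℂ

/-- The basis vector `e_i` (1-based index `i`; it is `0` if `i` is out of range). -/
def ee (p q : ℕ) (i : ℕ) : V p q :=
  Sum.elim (fun j => if (j : ℕ) + 1 = i then 1 else 0) (fun _ => 0)

/-- The basis vector `f_j` (1-based index `j`; it is `0` if `j` is out of range). -/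
def ff (p q : ℕ) (i : ℕ) : V p q :=
  Sum.elim (fun _ => 0) (fun j => if (j : ℕ) + 1 = i then 1 else 0)

/-- The nilpotent endomorphism `x_λ` with `x(e_i) = e_{i-1}`, `x(f_j) = f_{j-1}`. -/
def xmap (p q : ℕ) : V p q →ₗ[ℂ] V p q where
  toFun v := Sum.elim
    (fun j => if h : (j : ℕ) + 1 < p then v (Sum.inl ⟨(j : ℕ) + 1, h⟩) else 0)
    (fun j => if h : (j : ℕ) + 1 < q then v (Sum.inr ⟨(j : ℕ) + 1, h⟩) else 0)
  map_add' u v := by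
    funext s; cases s <;> dsimp <;> split <;> simp
  map_smul' c v := by
    funext s; cases s <;> dsimp <;> split <;> simp

/-- The Gram matrix of the bilinear form `β_λ` for `λ = (p, q)` (0-based indices). -/
def gram (p q : ℕ) : Matrix (Fin p ⊕ Fin q) (Fin p ⊕ Fin q) ℂ :=
  fun s t =>
    match s, t with
    | Sum.inl i, Sum.inl j =>
        if p = q then 0 else if (i : ℕ) + (j : ℕ) + 2 = p + 1 then (-1 : ℂ) ^ (i : ℕ) else 0
    | Sum.inl i, Sum.inr j =>
        if p = q then (if (i : ℕ) + (j : ℕ) + 2 = p + 1 then (-1 : ℂ) ^ (i : ℕ) else 0) else 0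
    | Sum.inr i, Sum.inl j =>
        if p = q then (if (j : ℕ) + (i : ℕ) + 2 = p + 1 then (-1 : ℂ) ^ (j : ℕ) else 0) else 0
    | Sum.inr i, Sum.inr j =>
        if p = q then 0 else if (i : ℕ) + (j : ℕ) + 2 = q + 1 then (-1 : ℂ) ^ (i : ℕ) else 0

/-- The symmetric bilinear form `β_λ` for `λ = (p, q)`. -/
def beta (p q : ℕ) : LinearMap.BilinForm ℂ (V p q) :=
  Matrix.toLinearMap₂' ℂ (gram p q)

/-- Orthogonal complement with respect to `β_λ`. -/
def orth (p q : ℕ) (W : Submodule ℂ (V p q)) : Submodule ℂ (V p q) :=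
  (beta p q).orthogonal W

/-- The subspace `⟨e_1, …, e_r, f_1, …, f_s⟩`. -/
def EF (p q r s : ℕ) : Submodule ℂ (V p q) :=
  Submodule.span ℂ
    ({v | ∃ i, 1 ≤ i ∧ i ≤ r ∧ v = ee p q i} ∪ {v | ∃ j, 1 ≤ j ∧ j ≤ s ∧ v = ff p q j})

/-- A complete isotropic flag in `(V_λ, β_λ)`, encoded as a function `ℕ → Submodule`
which is `⊤` from degree `p+q` on. -/
def IsFlag (p q : ℕ) (F : ℕ → Submodule ℂ (V p q)) : Prop :=
  (∀ i ≤ p + q, Module.finrank ℂ (F i) = i) ∧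
  (∀ i < p + q, F i ≤ F (i + 1)) ∧
  (∀ i ≤ p + q, F (p + q - i) = orth p q (F i)) ∧
  (∀ i, p + q ≤ i → F i = ⊤)

/-- The flag `F` lies in the Springer fiber of `x_λ`. -/
def InSpringer (p q : ℕ) (F : ℕ → Submodule ℂ (V p q)) : Prop :=
  ∀ i < p + q, (F (i + 1)).map (xmap p q) ≤ F i
/-- The coordinate projection `V_(p,q) → V_(p',q')`, sending `e_i ↦ e_i` (resp. `f_j ↦ f_j`)
when the index is in range and to `0` otherwise. -/
def Pmap (p q p' q' : ℕ) : V p q →ₗ[ℂ] V p' q' where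
  toFun v := Sum.elim
    (fun i => if h : (i : ℕ) < p then v (Sum.inl ⟨(i : ℕ), h⟩) else 0)
    (fun j => if h : (j : ℕ) < q then v (Sum.inr ⟨(j : ℕ), h⟩) else 0)
  map_add' u v := by
    funext s; cases s <;> dsimp <;> split <;> simp
  map_smul' c v := by
    funext s; cases s <;> dsimp <;> split <;> simp

/-- The flag in `V_(p',q')` induced, via a linear map `Q` defined on `W^⊥` and killing `W`
(representing an isomorphism `W^⊥/W ≅ V_(p',q')`), by the part `F_l ⊆ F_{l+1} ⊆ …` of a
flag `F` in `V_(p,q)`:  `F''_i = Q(F_{l+i}/W)` for `i ≤ (p'+q')/2`, and the remaining spaces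
are determined by taking orthogonal complements with respect to `β_(p',q')`. -/
def Qflag (p q p' q' l : ℕ) (W : Submodule ℂ (V p q)) (Q : V p q →ₗ[ℂ] V p' q')
    (F : ℕ → Submodule ℂ (V p q)) : ℕ → Submodule ℂ (V p' q') :=
  fun i =>
    if i ≤ (p' + q') / 2 then (F (l + i) ⊓ orth p q W).map Q
    else if i ≤ p' + q' then orth p' q' ((F (l + (p' + q' - i)) ⊓ orth p q W).map Q)
    else ⊤

/-- The flag in `V_(2t,2t)` obtained from a flag `F` in `V_(p,q)` by applying the projection
`Pmap` to `F_0, …, F_{2t}` and completing by orthogonal complements. -/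
def Pflag (p q t : ℕ) (F : ℕ → Submodule ℂ (V p q)) : ℕ → Submodule ℂ (V (2*t) (2*t)) :=
  fun i =>
    if i ≤ 2*t then (F i).map (Pmap p q (2*t) (2*t))
    else if i ≤ 4*t then orth (2*t) (2*t) ((F (4*t - i)).map (Pmap p q (2*t) (2*t)))
    else ⊤

namespace S19
open Submodule Module LinearMap

local notation "e" i => ee 5 3 i
local notation "f" i => ff 5 3 i

lemma fv1 : ((1:Fin 5):ℕ) = 1 := rfl
lemma fv2 : ((2:Fin 5):ℕ) = 2 := rfl
lemma fv3 : ((3:Fin 5):ℕ) = 3 := rfl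
lemma fv4 : ((4:Fin 5):ℕ) = 4 := rfl
lemma fw1 : ((1:Fin 3):ℕ) = 1 := rfl
lemma fw2 : ((2:Fin 3):ℕ) = 2 := rfl

lemma expand (w : V 5 3) : w =
    w (.inl 0) • (e 1) + w (.inl 1) • (e 2) + w (.inl 2) • (e 3) + w (.inl 3) • (e 4) +
    w (.inl 4) • (e 5) + w (.inr 0) • (f 1) + w (.inr 1) • (f 2) + w (.inr 2) • (f 3) := by
  funext s
  rcases s with i | j
  · fin_cases i <;> simp [ee, ff, fv1, fv2, fv3, fv4]
  · fin_cases j <;> simp [ee, ff, fw1, fw2]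

lemma beta_apply (v w : V 5 3) : beta 5 3 v w =
    v (.inl 0) * w (.inl 4) - v (.inl 1) * w (.inl 3) + v (.inl 2) * w (.inl 2)
    - v (.inl 3) * w (.inl 1) + v (.inl 4) * w (.inl 0)
    + v (.inr 0) * w (.inr 2) - v (.inr 1) * w (.inr 1) + v (.inr 2) * w (.inr 0) := by
  simp [beta, Matrix.toLinearMap₂'_apply, gram, Fintype.sum_sum_type,
    Fin.sum_univ_five, Fin.sum_univ_three, fv1, fv2, fv3, fv4, fw1, fw2]
  ring


lemma beta_e1 (w : V 5 3) : beta 5 3 (e 1) w = w (.inl 4) := by simp [beta_apply, ee, ff, fv1, fv2, fv3, fv4, fw1, fw2]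
lemma beta_e2 (w : V 5 3) : beta 5 3 (e 2) w = -w (.inl 3) := by simp [beta_apply, ee, ff, fv1, fv2, fv3, fv4, fw1, fw2]
lemma beta_e3 (w : V 5 3) : beta 5 3 (e 3) w = w (.inl 2) := by simp [beta_apply, ee, ff, fv1, fv2, fv3, fv4, fw1, fw2]
lemma beta_e4 (w : V 5 3) : beta 5 3 (e 4) w = -w (.inl 1) := by simp [beta_apply, ee, ff, fv1, fv2, fv3, fv4, fw1, fw2]
lemma beta_e5 (w : V 5 3) : beta 5 3 (e 5) w = w (.inl 0) := by simp [beta_apply, ee, ff, fv1, fv2, fv3, fv4, fw1, fw2]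
lemma beta_f1 (w : V 5 3) : beta 5 3 (f 1) w = w (.inr 2) := by simp [beta_apply, ee, ff, fv1, fv2, fv3, fv4, fw1, fw2]
lemma beta_f2 (w : V 5 3) : beta 5 3 (f 2) w = -w (.inr 1) := by simp [beta_apply, ee, ff, fv1, fv2, fv3, fv4, fw1, fw2]
lemma beta_f3 (w : V 5 3) : beta 5 3 (f 3) w = w (.inr 0) := by simp [beta_apply, ee, ff, fv1, fv2, fv3, fv4, fw1, fw2]

lemma xmap_apply (v : V 5 3) (s : Fin 5 ⊕ Fin 3) : xmap 5 3 v s = Sum.elim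
    (fun j : Fin 5 => if h : (j : ℕ) + 1 < 5 then v (Sum.inl ⟨(j : ℕ) + 1, h⟩) else 0)
    (fun j : Fin 3 => if h : (j : ℕ) + 1 < 3 then v (Sum.inr ⟨(j : ℕ) + 1, h⟩) else 0) s := rfl

lemma xe1 : xmap 5 3 (e 1) = 0 := by
  funext s; rcases s with i | j
  · fin_cases i <;> simp [xmap_apply, ee, fv1, fv2, fv3, fv4]
  · fin_cases j <;> simp [xmap_apply, ee, fw1, fw2]
lemma xe2 : xmap 5 3 (e 2) = (e 1) := by
  funext s; rcases s with i | j
  · fin_cases i <;> simp [xmap_apply, ee, fv1, fv2, fv3, fv4]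
  · fin_cases j <;> simp [xmap_apply, ee, ff, fw1, fw2]
lemma xe3 : xmap 5 3 (e 3) = (e 2) := by
  funext s; rcases s with i | j
  · fin_cases i <;> simp [xmap_apply, ee, fv1, fv2, fv3, fv4]
  · fin_cases j <;> simp [xmap_apply, ee, ff, fw1, fw2]
lemma xe4 : xmap 5 3 (e 4) = (e 3) := by
  funext s; rcases s with i | j
  · fin_cases i <;> simp [xmap_apply, ee, fv1, fv2, fv3, fv4]
  · fin_cases j <;> simp [xmap_apply, ee, ff, fw1, fw2]
lemma xf1 : xmap 5 3 (f 1) = 0 := by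
  funext s; rcases s with i | j
  · fin_cases i <;> simp [xmap_apply, ff, fv1, fv2, fv3, fv4]
  · fin_cases j <;> simp [xmap_apply, ff, fw1, fw2]
lemma xf2 : xmap 5 3 (f 2) = (f 1) := by
  funext s; rcases s with i | j
  · fin_cases i <;> simp [xmap_apply, ee, ff, fv1, fv2, fv3, fv4]
  · fin_cases j <;> simp [xmap_apply, ee, ff, fw1, fw2]

lemma xcoord_l4 (v : V 5 3) : xmap 5 3 v (.inl 4) = 0 := by simp [xmap_apply, fv4]
lemma xcoord_r2 (v : V 5 3) : xmap 5 3 v (.inr 2) = 0 := by simp [xmap_apply, fw2]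

lemma mem_orth_span {S : Set (V 5 3)} {w : V 5 3} :
    w ∈ orth 5 3 (span ℂ S) ↔ ∀ v ∈ S, beta 5 3 v w = 0 := by
  constructor
  · intro h v hv
    exact h v (subset_span hv)
  · intro h n hn
    induction hn using span_induction with
    | mem v hv => exact h v hv
    | zero => simp
    | add u v _ _ hu hv => rw [map_add, LinearMap.add_apply, hu, hv, add_zero]
    | smul c u _ hu => rw [map_smul, LinearMap.smul_apply, hu, smul_zero]

abbrev W2 : Submodule ℂ (V 5 3) := span ℂ {ee 5 3 1, ff 5 3 1}
abbrev W3 : Submodule ℂ (V 5 3) := span ℂ {ee 5 3 1, ee 5 3 2, ff 5 3 1}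
abbrev W4 : Submodule ℂ (V 5 3) := span ℂ {ee 5 3 1, ee 5 3 2, ff 5 3 1, ff 5 3 2 - ee 5 3 3}
abbrev W5 : Submodule ℂ (V 5 3) := span ℂ {ee 5 3 1, ee 5 3 2, ee 5 3 3, ff 5 3 1, ff 5 3 2}
abbrev W6 : Submodule ℂ (V 5 3) :=
  span ℂ {ee 5 3 1, ee 5 3 2, ee 5 3 3, ee 5 3 4, ff 5 3 1, ff 5 3 2}

lemma ker_xmap : LinearMap.ker (xmap 5 3) = W2 := by
  apply le_antisymm
  · intro v hv
    rw [LinearMap.mem_ker] at hv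
    have h1 : v (.inl 1) = 0 := by have := congrFun hv (.inl 0); simpa [xmap_apply] using this
    have h2 : v (.inl 2) = 0 := by
      have := congrFun hv (.inl 1); simpa [xmap_apply, fv1] using this
    have h3 : v (.inl 3) = 0 := by
      have := congrFun hv (.inl 2); simpa [xmap_apply, fv2] using this
    have h4 : v (.inl 4) = 0 := by
      have := congrFun hv (.inl 3); simpa [xmap_apply, fv3] using this
    have h5 : v (.inr 1) = 0 := by have := congrFun hv (.inr 0); simpa [xmap_apply] using this
    have h6 : v (.inr 2) = 0 := by
      have := congrFun hv (.inr 1); simpa [xmap_apply, fw1] using this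
    have hrep : v = v (.inl 0) • (e 1) + v (.inr 0) • (f 1) := by
      conv_lhs => rw [expand v]
      rw [h1, h2, h3, h4, h5, h6]
      module
    rw [hrep]
    exact add_mem (smul_mem _ _ (subset_span (by simp))) (smul_mem _ _ (subset_span (by simp)))
  · rw [span_le]
    rintro v (rfl | rfl) <;> simp [LinearMap.mem_ker, xe1, xf1]

lemma orthW2 : orth 5 3 W2 = W6 := by
  apply le_antisymm
  · intro w hw
    rw [mem_orth_span] at hw
    have h1 : w (.inl 4) = 0 := by have := hw (e 1) (by simp); rwa [beta_e1] at this
    have h2 : w (.inr 2) = 0 := by have := hw (f 1) (by simp); rwa [beta_f1] at this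
    have hrep : w = w (.inl 0) • (e 1) + w (.inl 1) • (e 2) + w (.inl 2) • (e 3) +
        w (.inl 3) • (e 4) + w (.inr 0) • (f 1) + w (.inr 1) • (f 2) := by
      conv_lhs => rw [expand w]
      rw [h1, h2]
      module
    rw [hrep]
    refine add_mem (add_mem (add_mem (add_mem (add_mem ?_ ?_) ?_) ?_) ?_) ?_ <;>
      exact smul_mem _ _ (subset_span (by simp))
  · rw [span_le]
    intro g hg
    rw [SetLike.mem_coe, mem_orth_span]
    intro v hv
    simp only [Set.mem_insert_iff, Set.mem_singleton_iff] at hg hv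
    rcases hv with rfl | rfl <;>
      rcases hg with rfl | rfl | rfl | rfl | rfl | rfl <;>
        simp [beta_apply, ee, ff, fv1, fv2, fv3, fv4, fw1, fw2]

lemma orthW3 : orth 5 3 W3 = W5 := by
  apply le_antisymm
  · intro w hw
    rw [mem_orth_span] at hw
    have h1 : w (.inl 4) = 0 := by have := hw (e 1) (by simp); rwa [beta_e1] at this
    have h2 : w (.inl 3) = 0 := by
      have := hw (e 2) (by simp); rw [beta_e2] at this; exact neg_eq_zero.mp this
    have h3 : w (.inr 2) = 0 := by have := hw (f 1) (by simp); rwa [beta_f1] at this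
    have hrep : w = w (.inl 0) • (e 1) + w (.inl 1) • (e 2) + w (.inl 2) • (e 3) +
        w (.inr 0) • (f 1) + w (.inr 1) • (f 2) := by
      conv_lhs => rw [expand w]
      rw [h1, h2, h3]
      module
    rw [hrep]
    refine add_mem (add_mem (add_mem (add_mem ?_ ?_) ?_) ?_) ?_ <;>
      exact smul_mem _ _ (subset_span (by simp))
  · rw [span_le]
    intro g hg
    rw [SetLike.mem_coe, mem_orth_span]
    intro v hv
    simp only [Set.mem_insert_iff, Set.mem_singleton_iff] at hg hv
    rcases hv with rfl | rfl | rfl <;>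
      rcases hg with rfl | rfl | rfl | rfl | rfl <;>
        simp [beta_apply, ee, ff, fv1, fv2, fv3, fv4, fw1, fw2]

lemma orthW4 : orth 5 3 W4 = W4 := by
  apply le_antisymm
  · intro w hw
    rw [mem_orth_span] at hw
    have h1 : w (.inl 4) = 0 := by have := hw (e 1) (by simp); rwa [beta_e1] at this
    have h2 : w (.inl 3) = 0 := by
      have := hw (e 2) (by simp); rw [beta_e2] at this; exact neg_eq_zero.mp this
    have h3 : w (.inr 2) = 0 := by have := hw (f 1) (by simp); rwa [beta_f1] at this
    have h4 : w (.inr 1) = -w (.inl 2) := by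
      have := hw ((f 2) - (e 3)) (by simp)
      rw [map_sub, LinearMap.sub_apply, beta_f2, beta_e3] at this
      linear_combination -this
    have hrep : w = w (.inl 0) • (e 1) + w (.inl 1) • (e 2) + w (.inr 0) • (f 1) +
        (-(w (.inl 2))) • ((f 2) - (e 3)) := by
      conv_lhs => rw [expand w]
      rw [h1, h2, h3, h4]
      module
    rw [hrep]
    refine add_mem (add_mem (add_mem ?_ ?_) ?_) ?_ <;>
      exact smul_mem _ _ (subset_span (by simp))
  · rw [span_le]
    intro g hg
    rw [SetLike.mem_coe, mem_orth_span]
    intro v hv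
    simp only [Set.mem_insert_iff, Set.mem_singleton_iff] at hg hv
    rcases hv with rfl | rfl | rfl | rfl <;>
      rcases hg with rfl | rfl | rfl | rfl <;>
        simp [beta_apply, ee, ff, fv1, fv2, fv3, fv4, fw1, fw2]

lemma orthW5 : orth 5 3 W5 = W3 := by
  apply le_antisymm
  · intro w hw
    rw [mem_orth_span] at hw
    have h1 : w (.inl 4) = 0 := by have := hw (e 1) (by simp); rwa [beta_e1] at this
    have h2 : w (.inl 3) = 0 := by
      have := hw (e 2) (by simp); rw [beta_e2] at this; exact neg_eq_zero.mp this
    have h3 : w (.inl 2) = 0 := by have := hw (e 3) (by simp); rwa [beta_e3] at this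
    have h4 : w (.inr 2) = 0 := by have := hw (f 1) (by simp); rwa [beta_f1] at this
    have h5 : w (.inr 1) = 0 := by
      have := hw (f 2) (by simp); rw [beta_f2] at this; exact neg_eq_zero.mp this
    have hrep : w = w (.inl 0) • (e 1) + w (.inl 1) • (e 2) + w (.inr 0) • (f 1) := by
      conv_lhs => rw [expand w]
      rw [h1, h2, h3, h4, h5]
      module
    rw [hrep]
    refine add_mem (add_mem ?_ ?_) ?_ <;> exact smul_mem _ _ (subset_span (by simp))
  · rw [span_le]
    intro g hg
    rw [SetLike.mem_coe, mem_orth_span]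
    intro v hv
    simp only [Set.mem_insert_iff, Set.mem_singleton_iff] at hg hv
    rcases hv with rfl | rfl | rfl | rfl | rfl <;>
      rcases hg with rfl | rfl | rfl <;>
        simp [beta_apply, ee, ff, fv1, fv2, fv3, fv4, fw1, fw2]

lemma orthW6 : orth 5 3 W6 = W2 := by
  apply le_antisymm
  · intro w hw
    rw [mem_orth_span] at hw
    have h1 : w (.inl 4) = 0 := by have := hw (e 1) (by simp); rwa [beta_e1] at this
    have h2 : w (.inl 3) = 0 := by
      have := hw (e 2) (by simp); rw [beta_e2] at this; exact neg_eq_zero.mp this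
    have h3 : w (.inl 2) = 0 := by have := hw (e 3) (by simp); rwa [beta_e3] at this
    have h4 : w (.inl 1) = 0 := by
      have := hw (e 4) (by simp); rw [beta_e4] at this; exact neg_eq_zero.mp this
    have h5 : w (.inr 2) = 0 := by have := hw (f 1) (by simp); rwa [beta_f1] at this
    have h6 : w (.inr 1) = 0 := by
      have := hw (f 2) (by simp); rw [beta_f2] at this; exact neg_eq_zero.mp this
    have hrep : w = w (.inl 0) • (e 1) + w (.inr 0) • (f 1) := by
      conv_lhs => rw [expand w]
      rw [h1, h2, h3, h4, h5, h6]
      module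
    rw [hrep]
    exact add_mem (smul_mem _ _ (subset_span (by simp))) (smul_mem _ _ (subset_span (by simp)))
  · rw [span_le]
    intro g hg
    rw [SetLike.mem_coe, mem_orth_span]
    intro v hv
    simp only [Set.mem_insert_iff, Set.mem_singleton_iff] at hg hv
    rcases hv with rfl | rfl | rfl | rfl | rfl | rfl <;>
      rcases hg with rfl | rfl <;>
        simp [beta_apply, ee, ff, fv1, fv2, fv3, fv4, fw1, fw2]

lemma orth_bot : orth 5 3 (⊥ : Submodule ℂ (V 5 3)) = ⊤ := by
  rw [eq_top_iff]
  intro w _ n hn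
  rw [Submodule.mem_bot] at hn
  subst hn
  simp [LinearMap.BilinForm.IsOrtho]

lemma orth_top : orth 5 3 (⊤ : Submodule ℂ (V 5 3)) = ⊥ := by
  rw [eq_bot_iff]
  intro w hw
  have h1 := hw (e 1) trivial
  have h2 := hw (e 2) trivial
  have h3 := hw (e 3) trivial
  have h4 := hw (e 4) trivial
  have h5 := hw (e 5) trivial
  have g1 := hw (f 1) trivial
  have g2 := hw (f 2) trivial
  have g3 := hw (f 3) trivial
  rw [beta_e1] at h1; rw [beta_e2] at h2; rw [beta_e3] at h3; rw [beta_e4] at h4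
  rw [beta_e5] at h5; rw [beta_f1] at g1; rw [beta_f2] at g2; rw [beta_f3] at g3
  rw [Submodule.mem_bot]
  rw [expand w, h1, neg_eq_zero.mp h2, h3, neg_eq_zero.mp h4, h5, g1, neg_eq_zero.mp g2, g3]
  module


lemma finrank_V : finrank ℂ (V 5 3) = 8 := by
  rw [Module.finrank_pi]; simp

lemma li_aux {k : ℕ} (b : Fin k → V 5 3) (c : Fin k → (Fin 5 ⊕ Fin 3))
    (h : ∀ i j, b j (c i) = if i = j then 1 else 0) : LinearIndependent ℂ b := by
  rw [Fintype.linearIndependent_iff]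
  intro g hg i
  have := congrFun hg (c i)
  simpa [Finset.sum_apply, h, Finset.sum_ite_eq, mul_comm] using this

lemma frW2 : finrank ℂ W2 = 2 := by
  have hr : ({ee 5 3 1, ff 5 3 1} : Set (V 5 3)) = Set.range ![ee 5 3 1, ff 5 3 1] := by
    ext v; simp [Matrix.range_cons, Matrix.range_empty]; tauto
  rw [W2, hr, finrank_span_eq_card ?_]
  · simp
  · apply li_aux _ ![.inl 0, .inr 0]
    intro i j
    fin_cases i <;> fin_cases j <;> simp [ee, ff]

lemma frW3 : finrank ℂ W3 = 3 := by
  have hr : ({ee 5 3 1, ee 5 3 2, ff 5 3 1} : Set (V 5 3)) =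
      Set.range ![ee 5 3 1, ee 5 3 2, ff 5 3 1] := by
    ext v; simp [Matrix.range_cons, Matrix.range_empty]; tauto
  rw [W3, hr, finrank_span_eq_card ?_]
  · simp
  · apply li_aux _ ![.inl 0, .inl 1, .inr 0]
    intro i j
    fin_cases i <;> fin_cases j <;> simp [ee, ff]

lemma frW4 : finrank ℂ W4 = 4 := by
  have hr : ({ee 5 3 1, ee 5 3 2, ff 5 3 1, ff 5 3 2 - ee 5 3 3} : Set (V 5 3)) =
      Set.range ![ee 5 3 1, ee 5 3 2, ff 5 3 1, ff 5 3 2 - ee 5 3 3] := by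
    ext v; simp [Matrix.range_cons, Matrix.range_empty]; tauto
  rw [W4, hr, finrank_span_eq_card ?_]
  · simp
  · apply li_aux _ ![.inl 0, .inl 1, .inr 0, .inr 1]
    intro i j
    fin_cases i <;> fin_cases j <;> simp [ee, ff]

lemma frW5 : finrank ℂ W5 = 5 := by
  have hr : ({ee 5 3 1, ee 5 3 2, ee 5 3 3, ff 5 3 1, ff 5 3 2} : Set (V 5 3)) =
      Set.range ![ee 5 3 1, ee 5 3 2, ee 5 3 3, ff 5 3 1, ff 5 3 2] := by
    ext v; simp [Matrix.range_cons, Matrix.range_empty]; tauto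
  rw [W5, hr, finrank_span_eq_card ?_]
  · simp
  · apply li_aux _ ![.inl 0, .inl 1, .inl 2, .inr 0, .inr 1]
    intro i j
    fin_cases i <;> fin_cases j <;> simp [ee, ff]

lemma frW6 : finrank ℂ W6 = 6 := by
  have hr : ({ee 5 3 1, ee 5 3 2, ee 5 3 3, ee 5 3 4, ff 5 3 1, ff 5 3 2} : Set (V 5 3)) =
      Set.range ![ee 5 3 1, ee 5 3 2, ee 5 3 3, ee 5 3 4, ff 5 3 1, ff 5 3 2] := by
    ext v; simp [Matrix.range_cons, Matrix.range_empty]; tauto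
  rw [W6, hr, finrank_span_eq_card ?_]
  · simp
  · apply li_aux _ ![.inl 0, .inl 1, .inl 2, .inl 3, .inr 0, .inr 1]
    intro i j
    fin_cases i <;> fin_cases j <;> simp [ee, ff]


lemma orth_antitone {U W : Submodule ℂ (V 5 3)} (h : U ≤ W) : orth 5 3 W ≤ orth 5 3 U :=
  LinearMap.BilinForm.orthogonal_le h

lemma line_rep {L : Submodule ℂ (V 5 3)} (hL : L ≤ W2) (hr : finrank ℂ L = 1) :
    ∃ a b : ℂ, ¬(a = 0 ∧ b = 0) ∧ L = span ℂ {a • (ee 5 3 1) + b • (ff 5 3 1)} := by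
  have hne : L ≠ ⊥ := by
    intro h
    rw [h] at hr
    simp at hr
  obtain ⟨v, hvL, hv0⟩ := Submodule.exists_mem_ne_zero_of_ne_bot hne
  obtain ⟨a, b, hab⟩ := Submodule.mem_span_pair.mp (hL hvL)
  refine ⟨a, b, ?_, ?_⟩
  · rintro ⟨rfl, rfl⟩
    apply hv0
    rw [← hab]
    simp
  · rw [hab]
    symm
    apply Submodule.eq_of_le_of_finrank_eq
    · rwa [Submodule.span_singleton_le_iff_mem]
    · rw [finrank_span_singleton hv0, hr]

lemma mem_orth_line (a b : ℂ) (w : V 5 3) :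
    w ∈ orth 5 3 (span ℂ {a • (ee 5 3 1) + b • (ff 5 3 1)}) ↔
      a * w (.inl 4) + b * w (.inr 2) = 0 := by
  rw [mem_orth_span]
  constructor
  · intro h
    have := h _ (Set.mem_singleton _)
    rwa [map_add, map_smul, map_smul, LinearMap.add_apply, LinearMap.smul_apply,
      LinearMap.smul_apply, beta_e1, beta_f1, smul_eq_mul, smul_eq_mul] at this
  · intro h v hv
    rw [Set.mem_singleton_iff] at hv
    subst hv
    rwa [map_add, map_smul, map_smul, LinearMap.add_apply, LinearMap.smul_apply,
      LinearMap.smul_apply, beta_e1, beta_f1, smul_eq_mul, smul_eq_mul]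

lemma fr_orth_line {a b : ℂ} (hab : ¬(a = 0 ∧ b = 0)) :
    finrank ℂ (orth 5 3 (span ℂ {a • (ee 5 3 1) + b • (ff 5 3 1)})) = 7 := by
  set φ : V 5 3 →ₗ[ℂ] ℂ :=
    a • (LinearMap.proj (Sum.inl 4)) + b • (LinearMap.proj (Sum.inr 2)) with hφ
  have hker : orth 5 3 (span ℂ {a • (ee 5 3 1) + b • (ff 5 3 1)}) = LinearMap.ker φ := by
    ext w
    rw [mem_orth_line, LinearMap.mem_ker, hφ]
    simp [smul_eq_mul]
  have hrange : finrank ℂ (LinearMap.range φ) = 1 := by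
    have h1 : finrank ℂ (LinearMap.range φ) ≤ 1 := by
      simpa [finrank_self] using Submodule.finrank_le (LinearMap.range φ)
    have h2 : LinearMap.range φ ≠ ⊥ := by
      intro hbot
      have h0 : φ = 0 := LinearMap.range_eq_bot.mp hbot
      rcases not_and_or.mp hab with ha | hb
      · apply ha
        have := congrArg (fun ψ : V 5 3 →ₗ[ℂ] ℂ => ψ (ee 5 3 5)) h0
        simpa [hφ, ee, smul_eq_mul, fv4, fw2] using this
      · apply hb
        have := congrArg (fun ψ : V 5 3 →ₗ[ℂ] ℂ => ψ (ff 5 3 3)) h0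
        simpa [hφ, ff, smul_eq_mul, fv4, fw2] using this
    have h3 : 0 < finrank ℂ (LinearMap.range φ) :=
      Module.finrank_pos_iff.mpr (Submodule.nontrivial_iff_ne_bot.mpr h2)
    omega
  have := LinearMap.finrank_range_add_finrank_ker φ
  rw [finrank_V, hrange] at this
  rw [hker]
  omega

lemma orth_orth_line {a b : ℂ} (hab : ¬(a = 0 ∧ b = 0)) :
    orth 5 3 (orth 5 3 (span ℂ {a • (ee 5 3 1) + b • (ff 5 3 1)})) =
      span ℂ {a • (ee 5 3 1) + b • (ff 5 3 1)} := by
  set v : V 5 3 := a • (ee 5 3 1) + b • (ff 5 3 1) with hv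
  apply le_antisymm
  · intro w hw
    have he1 : (ee 5 3 1) ∈ orth 5 3 (span ℂ {v}) := by rw [mem_orth_line]; simp [ee, ff, fv4, fw2]
    have he2 : (ee 5 3 2) ∈ orth 5 3 (span ℂ {v}) := by rw [mem_orth_line]; simp [ee, ff, fv4, fw2]
    have he3 : (ee 5 3 3) ∈ orth 5 3 (span ℂ {v}) := by rw [mem_orth_line]; simp [ee, ff, fv4, fw2]
    have he4 : (ee 5 3 4) ∈ orth 5 3 (span ℂ {v}) := by rw [mem_orth_line]; simp [ee, ff, fv4, fw2]
    have hf1 : (ff 5 3 1) ∈ orth 5 3 (span ℂ {v}) := by rw [mem_orth_line]; simp [ee, ff, fv4, fw2]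
    have hf2 : (ff 5 3 2) ∈ orth 5 3 (span ℂ {v}) := by rw [mem_orth_line]; simp [ee, ff, fv4, fw2]
    have hu : b • (ee 5 3 5) - a • (ff 5 3 3) ∈ orth 5 3 (span ℂ {v}) := by
      rw [mem_orth_line]
      simp [ee, ff, fv4, fw2]
      ring
    have h1 : w (.inl 4) = 0 := by have := hw _ he1; rwa [beta_e1] at this
    have h2 : w (.inl 3) = 0 := by
      have := hw _ he2; rw [beta_e2] at this
      exact neg_eq_zero.mp this
    have h3 : w (.inl 2) = 0 := by have := hw _ he3; rwa [beta_e3] at this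
    have h4 : w (.inl 1) = 0 := by
      have := hw _ he4; rw [beta_e4] at this
      exact neg_eq_zero.mp this
    have h5 : w (.inr 2) = 0 := by have := hw _ hf1; rwa [beta_f1] at this
    have h6 : w (.inr 1) = 0 := by
      have := hw _ hf2; rw [beta_f2] at this
      exact neg_eq_zero.mp this
    have hrel : b * w (.inl 0) - a * w (.inr 0) = 0 := by
      have := hw _ hu
      rw [map_sub, LinearMap.sub_apply, map_smul, map_smul,
        LinearMap.smul_apply, LinearMap.smul_apply, beta_e5, beta_f3, smul_eq_mul,
        smul_eq_mul] at this
      exact this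
    have hrep : w = w (.inl 0) • (ee 5 3 1) + w (.inr 0) • (ff 5 3 1) := by
      conv_lhs => rw [expand w]
      rw [h1, h2, h3, h4, h5, h6]
      module
    rw [Submodule.mem_span_singleton]
    by_cases ha : a = 0
    · have hb : b ≠ 0 := by tauto
      have hw0 : w (.inl 0) = 0 := by
        rw [ha] at hrel
        simp at hrel
        tauto
      refine ⟨w (.inr 0) / b, ?_⟩
      conv_rhs => rw [hrep]
      rw [hv, hw0, ha]
      match_scalars
      · simp
      · field_simp
    · refine ⟨w (.inl 0) / a, ?_⟩
      conv_rhs => rw [hrep]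
      rw [hv]
      match_scalars
      · rw [mul_one, mul_one, div_mul_cancel₀ _ ha]
      · rw [mul_one, mul_one, div_mul_eq_mul_div, div_eq_iff ha]
        linear_combination hrel
  · rw [Submodule.span_singleton_le_iff_mem]
    intro n hn
    rw [mem_orth_line] at hn
    rw [hv, beta_apply]
    simp only [Pi.add_apply, Pi.smul_apply, smul_eq_mul, ee, ff, Sum.elim_inl, Sum.elim_inr]
    norm_num [fv1, fv2, fv3, fv4, fw1, fw2]
    linear_combination hn


lemma xv_mem_W6 (v : V 5 3) : xmap 5 3 v ∈ W6 := by
  have hrep : xmap 5 3 v = (xmap 5 3 v) (.inl 0) • (ee 5 3 1) + (xmap 5 3 v) (.inl 1) • (ee 5 3 2)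
      + (xmap 5 3 v) (.inl 2) • (ee 5 3 3) + (xmap 5 3 v) (.inl 3) • (ee 5 3 4)
      + (xmap 5 3 v) (.inr 0) • (ff 5 3 1) + (xmap 5 3 v) (.inr 1) • (ff 5 3 2) := by
    conv_lhs => rw [expand (xmap 5 3 v)]
    rw [xcoord_l4, xcoord_r2]
    module
  rw [hrep]
  refine add_mem (add_mem (add_mem (add_mem (add_mem ?_ ?_) ?_) ?_) ?_) ?_ <;>
    exact smul_mem _ _ (subset_span (by simp))

lemma mapx_W3 : W3.map (xmap 5 3) ≤ W2 := by
  rw [Submodule.map_span, span_le]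
  intro u hu
  simp only [Set.image_insert_eq, Set.image_singleton, xe1, xe2, xf1,
    Set.mem_insert_iff, Set.mem_singleton_iff] at hu
  rcases hu with rfl | rfl | rfl
  · exact zero_mem _
  · exact subset_span (by simp)
  · exact zero_mem _

lemma mapx_W4 : W4.map (xmap 5 3) ≤ W3 := by
  rw [Submodule.map_span, span_le]
  intro u hu
  simp only [Set.image_insert_eq, Set.image_singleton, map_sub, xe1, xe2, xe3, xf1, xf2,
    Set.mem_insert_iff, Set.mem_singleton_iff] at hu
  rcases hu with rfl | rfl | rfl | rfl
  · exact zero_mem _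
  · exact subset_span (by simp)
  · exact zero_mem _
  · exact sub_mem (subset_span (by simp)) (subset_span (by simp))

lemma mapx_W5 : W5.map (xmap 5 3) ≤ W4 := by
  rw [Submodule.map_span, span_le]
  intro u hu
  simp only [Set.image_insert_eq, Set.image_singleton, xe1, xe2, xe3, xf1, xf2,
    Set.mem_insert_iff, Set.mem_singleton_iff] at hu
  rcases hu with rfl | rfl | rfl | rfl | rfl
  · exact zero_mem _
  · exact subset_span (by simp)
  · exact subset_span (by simp)
  · exact zero_mem _
  · exact subset_span (by simp)

lemma mapx_W6 : W6.map (xmap 5 3) ≤ W5 := by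
  rw [Submodule.map_span, span_le]
  intro u hu
  simp only [Set.image_insert_eq, Set.image_singleton, xe1, xe2, xe3, xe4, xf1, xf2,
    Set.mem_insert_iff, Set.mem_singleton_iff] at hu
  rcases hu with rfl | rfl | rfl | rfl | rfl | rfl
  · exact zero_mem _
  · exact subset_span (by simp)
  · exact subset_span (by simp)
  · exact subset_span (by simp)
  · exact zero_mem _
  · exact subset_span (by simp)

lemma F0_eq_bot {F : ℕ → Submodule ℂ (V 5 3)} (hF : IsFlag 5 3 F) : F 0 = ⊥ :=
  Submodule.finrank_eq_zero.mp (hF.1 0 (by norm_num))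

lemma comap_F0 {F : ℕ → Submodule ℂ (V 5 3)} (hF : IsFlag 5 3 F) :
    Submodule.comap (xmap 5 3) (F 0) = W2 := by
  rw [F0_eq_bot hF]
  exact ker_xmap

/-- The constructed flag. -/
def Fc (L : Submodule ℂ (V 5 3)) : ℕ → Submodule ℂ (V 5 3) := fun i =>
  if i = 0 then ⊥ else if i = 1 then L else if i = 2 then W2 else if i = 3 then W3
  else if i = 4 then W4 else if i = 5 then W5 else if i = 6 then W6
  else if i = 7 then orth 5 3 L else ⊤

lemma Fc_flag {L : Submodule ℂ (V 5 3)} (hle : L ≤ W2) (hr : finrank ℂ L = 1) :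
    IsFlag 5 3 (Fc L) := by
  obtain ⟨a, b, hab, hLrep⟩ := line_rep hle hr
  refine ⟨?_, ?_, ?_, ?_⟩
  · intro i hi
    interval_cases i <;> norm_num [Fc]
    · exact hr
    · exact frW2
    · exact frW3
    · exact frW4
    · exact frW5
    · exact frW6
    · rw [hLrep]; exact fr_orth_line hab
    · show finrank ℂ (⊤ : Submodule ℂ (V 5 3)) = 8
      rw [finrank_top, finrank_V]
  · intro i hi
    interval_cases i <;> norm_num [Fc]
    · exact hle
    · apply span_mono
      intro v hv
      simp only [Set.mem_insert_iff, Set.mem_singleton_iff] at hv ⊢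
      tauto
    · apply span_mono
      intro v hv
      simp only [Set.mem_insert_iff, Set.mem_singleton_iff] at hv ⊢
      tauto
    · rw [span_le]
      intro v hv
      simp only [Set.mem_insert_iff, Set.mem_singleton_iff] at hv
      rcases hv with rfl | rfl | rfl | rfl
      · exact subset_span (by simp)
      · exact subset_span (by simp)
      · exact subset_span (by simp)
      · exact sub_mem (subset_span (by simp)) (subset_span (by simp))
    · apply span_mono
      intro v hv
      simp only [Set.mem_insert_iff, Set.mem_singleton_iff] at hv ⊢
      tauto
    · rw [← orthW2]
      exact orth_antitone hle
  · intro i hi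
    interval_cases i <;> norm_num [Fc]
    · exact orth_bot.symm
    · exact orthW2.symm
    · exact orthW3.symm
    · exact orthW4.symm
    · exact orthW5.symm
    · exact orthW6.symm
    · rw [hLrep]; exact (orth_orth_line hab).symm
    · exact orth_top.symm
  · intro i hi
    simp only [Fc]
    rw [if_neg (by omega), if_neg (by omega), if_neg (by omega), if_neg (by omega),
      if_neg (by omega), if_neg (by omega), if_neg (by omega), if_neg (by omega)]


lemma backward {F : ℕ → Submodule ℂ (V 5 3)} (hflag : IsFlag 5 3 F)
    (h1 : F 1 ≤ W2) (h2 : F 2 = W2) (h3 : F 3 = W3) (h4 : F 4 = W4) :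
    InSpringer 5 3 F ∧ F 2 = Submodule.comap (xmap 5 3) (F 0) := by
  obtain ⟨hrank, hchain, hperp, htop⟩ := hflag
  have hF0 : F 0 = ⊥ := F0_eq_bot ⟨hrank, hchain, hperp, htop⟩
  have h5 : F 5 = orth 5 3 (F 3) := hperp 3 (by norm_num)
  have h6 : F 6 = orth 5 3 (F 2) := hperp 2 (by norm_num)
  have h7 : F 7 = orth 5 3 (F 1) := hperp 1 (by norm_num)
  have h8 : F 8 = ⊤ := htop 8 (by norm_num)
  constructor
  · intro i hi
    interval_cases i
    · rw [Submodule.map_le_iff_le_comap, hF0]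
      show F 1 ≤ LinearMap.ker (xmap 5 3)
      rw [ker_xmap]
      exact (hchain 1 (by norm_num)).trans h2.le
    · rw [Submodule.map_le_iff_le_comap, h2, ← ker_xmap]
      exact Submodule.comap_mono bot_le
    · rw [h3, h2]
      exact mapx_W3
    · rw [h4, h3]
      exact mapx_W4
    · rw [h5, h3, orthW3, h4]
      exact mapx_W5
    · rw [h6, h2, orthW2, h5, h3, orthW3]
      exact mapx_W6
    · rw [h6, h2, orthW2]
      intro u hu
      obtain ⟨v, _, rfl⟩ := Submodule.mem_map.mp hu
      exact xv_mem_W6 v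
    · intro u hu
      obtain ⟨v, _, rfl⟩ := Submodule.mem_map.mp hu
      rw [h7]
      exact orth_antitone h1 (by rw [orthW2]; exact xv_mem_W6 v)
  · rw [h2, hF0]
    exact ker_xmap.symm

lemma forward {F : ℕ → Submodule ℂ (V 5 3)} (hflag : IsFlag 5 3 F)
    (h2 : F 2 = Submodule.comap (xmap 5 3) (F 0)) :
    F 1 ≤ W2 ∧ F 2 = W2 := by
  have h2' : F 2 = W2 := by rw [h2, comap_F0 hflag]
  exact ⟨(hflag.2.1 1 (by norm_num)).trans h2'.le, h2'⟩

lemma flag_ext {F G : ℕ → Submodule ℂ (V 5 3)} (hF : IsFlag 5 3 F) (hG : IsFlag 5 3 G)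
    (h1 : F 1 = G 1) (h2 : F 2 = G 2) (h3 : F 3 = G 3) (h4 : F 4 = G 4) : F = G := by
  have e5F : F 5 = orth 5 3 (F 3) := hF.2.2.1 3 (by norm_num)
  have e6F : F 6 = orth 5 3 (F 2) := hF.2.2.1 2 (by norm_num)
  have e7F : F 7 = orth 5 3 (F 1) := hF.2.2.1 1 (by norm_num)
  have e5G : G 5 = orth 5 3 (G 3) := hG.2.2.1 3 (by norm_num)
  have e6G : G 6 = orth 5 3 (G 2) := hG.2.2.1 2 (by norm_num)
  have e7G : G 7 = orth 5 3 (G 1) := hG.2.2.1 1 (by norm_num)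
  funext i
  rcases i with _|_|_|_|_|_|_|_|i
  · rw [F0_eq_bot hF, F0_eq_bot hG]
  · exact h1
  · exact h2
  · exact h3
  · exact h4
  · show F 5 = G 5
    rw [e5F, e5G, h3]
  · show F 6 = G 6
    rw [e6F, e6G, h2]
  · show F 7 = G 7
    rw [e7F, e7G, h1]
  · show F (i + 8) = G (i + 8)
    rw [hF.2.2.2 (i + 8) (by omega), hG.2.2.2 (i + 8) (by omega)]


/-- The linear embedding `ℂ² → V` with image `⟨e_1, f_1⟩`. -/
def mlin : (Fin 2 → ℂ) →ₗ[ℂ] V 5 3 where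
  toFun c := c 0 • (ee 5 3 1) + c 1 • (ff 5 3 1)
  map_add' u v := by
    simp only [Pi.add_apply]
    module
  map_smul' c v := by
    simp only [Pi.smul_apply, RingHom.id_apply, smul_eq_mul]
    module

lemma mlin_inj : Function.Injective mlin := by
  intro c d h
  have h0 := congrFun h (Sum.inl 0)
  have h1 := congrFun h (Sum.inr 0)
  simp only [mlin, LinearMap.coe_mk, AddHom.coe_mk, Pi.add_apply, Pi.smul_apply,
    ee, ff, Sum.elim_inl, Sum.elim_inr, smul_eq_mul] at h0 h1
  norm_num at h0 h1
  funext i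
  fin_cases i
  · exact h0
  · exact h1

lemma mlin_range : LinearMap.range mlin = W2 := by
  apply le_antisymm
  · rintro u ⟨c, rfl⟩
    exact add_mem (smul_mem _ _ (subset_span (by simp))) (smul_mem _ _ (subset_span (by simp)))
  · rw [span_le]
    rintro u hu
    simp only [Set.mem_insert_iff, Set.mem_singleton_iff] at hu
    rcases hu with rfl | rfl
    · exact ⟨![1, 0], by simp [mlin]⟩
    · exact ⟨![0, 1], by simp [mlin]⟩

lemma finrank_map_mlin (p : Submodule ℂ (Fin 2 → ℂ)) :
    finrank ℂ (p.map mlin) = finrank ℂ p :=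
  (Submodule.equivMapOfInjective mlin mlin_inj p).finrank_eq.symm

lemma map_comap_mlin {L : Submodule ℂ (V 5 3)} (hL : L ≤ W2) :
    (L.comap mlin).map mlin = L := by
  rw [Submodule.map_comap_eq, mlin_range, inf_eq_right.mpr hL]

/-- The equivalence between lines in `⟨e_1, f_1⟩` and lines in `ℂ²`. -/
noncomputable def E2 : ↥{L : Submodule ℂ (V 5 3) | L ≤ W2 ∧ finrank ℂ L = 1} ≃
    {H : Submodule ℂ (Fin 2 → ℂ) // finrank ℂ H = 1} where
  toFun L := ⟨Submodule.comap mlin L.1, by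
    obtain ⟨hle, hr⟩ := L.2
    rw [← finrank_map_mlin, map_comap_mlin hle, hr]⟩
  invFun H := ⟨Submodule.map mlin H.1, by
    constructor
    · rw [← mlin_range]
      exact LinearMap.map_le_range
    · rw [finrank_map_mlin, H.2]⟩
  left_inv L := by
    obtain ⟨hle, _⟩ := L.2
    exact Subtype.ext (map_comap_mlin hle)
  right_inv H := Subtype.ext (Submodule.comap_map_eq_of_injective mlin_inj H.1)

end S19

open S19

/-- the irreducible component `K_a` of Example 2.12 for `λ = (5,3)`.
The complete isotropic flags in the Springer fiber with `F_2 = x^{-1}(F_0)`,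
`F_3 = ⟨e_1, e_2, f_1⟩`, `F_4 = ⟨e_1, e_2, f_1, f_2 - e_3⟩` are exactly the complete
isotropic flags with `F_1` an arbitrary line of `⟨e_1, f_1⟩` and `F_2, F_3, F_4` as
above (the rest being determined by `F_{8-i} = F_i^⊥`); in particular `F ↦ F_1` is a
bijection from this set onto the lines of `⟨e_1, f_1⟩`, hence onto `ℙ(ℂ²)`. -/
theorem statement19 :
    ({F : ℕ → Submodule ℂ (V 5 3) | IsFlag 5 3 F ∧ InSpringer 5 3 F ∧
        F 2 = Submodule.comap (xmap 5 3) (F 0) ∧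
        F 3 = Submodule.span ℂ {ee 5 3 1, ee 5 3 2, ff 5 3 1} ∧
        F 4 = Submodule.span ℂ {ee 5 3 1, ee 5 3 2, ff 5 3 1, ff 5 3 2 - ee 5 3 3}} =
      {F : ℕ → Submodule ℂ (V 5 3) | IsFlag 5 3 F ∧
        F 1 ≤ Submodule.span ℂ {ee 5 3 1, ff 5 3 1} ∧
        F 2 = Submodule.span ℂ {ee 5 3 1, ff 5 3 1} ∧
        F 3 = Submodule.span ℂ {ee 5 3 1, ee 5 3 2, ff 5 3 1} ∧
        F 4 = Submodule.span ℂ {ee 5 3 1, ee 5 3 2, ff 5 3 1, ff 5 3 2 - ee 5 3 3}}) ∧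
    Set.BijOn (fun F : ℕ → Submodule ℂ (V 5 3) => F 1)
      {F | IsFlag 5 3 F ∧ InSpringer 5 3 F ∧
        F 2 = Submodule.comap (xmap 5 3) (F 0) ∧
        F 3 = Submodule.span ℂ {ee 5 3 1, ee 5 3 2, ff 5 3 1} ∧
        F 4 = Submodule.span ℂ {ee 5 3 1, ee 5 3 2, ff 5 3 1, ff 5 3 2 - ee 5 3 3}}
      {L : Submodule ℂ (V 5 3) |
        L ≤ Submodule.span ℂ {ee 5 3 1, ff 5 3 1} ∧ Module.finrank ℂ L = 1} ∧
    Nonempty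
      (({F : ℕ → Submodule ℂ (V 5 3) | IsFlag 5 3 F ∧ InSpringer 5 3 F ∧
          F 2 = Submodule.comap (xmap 5 3) (F 0) ∧
          F 3 = Submodule.span ℂ {ee 5 3 1, ee 5 3 2, ff 5 3 1} ∧
          F 4 = Submodule.span ℂ {ee 5 3 1, ee 5 3 2, ff 5 3 1, ff 5 3 2 - ee 5 3 3}} :
            Set (ℕ → Submodule ℂ (V 5 3)))
        ≃ Projectivization ℂ (Fin 2 → ℂ)) := by
  have hseteq :
      {F : ℕ → Submodule ℂ (V 5 3) | IsFlag 5 3 F ∧ InSpringer 5 3 F ∧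
        F 2 = Submodule.comap (xmap 5 3) (F 0) ∧ F 3 = W3 ∧ F 4 = W4} =
      {F : ℕ → Submodule ℂ (V 5 3) | IsFlag 5 3 F ∧
        F 1 ≤ W2 ∧ F 2 = W2 ∧ F 3 = W3 ∧ F 4 = W4} := by
    ext F
    simp only [Set.mem_setOf_eq]
    constructor
    · rintro ⟨hflag, _, h2, h3, h4⟩
      obtain ⟨h1, h2'⟩ := forward hflag h2
      exact ⟨hflag, h1, h2', h3, h4⟩
    · rintro ⟨hflag, h1, h2, h3, h4⟩
      obtain ⟨hspr, h2'⟩ := backward hflag h1 h2 h3 h4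
      exact ⟨hflag, hspr, h2', h3, h4⟩
  have hbij : Set.BijOn (fun F : ℕ → Submodule ℂ (V 5 3) => F 1)
      {F : ℕ → Submodule ℂ (V 5 3) | IsFlag 5 3 F ∧ InSpringer 5 3 F ∧
        F 2 = Submodule.comap (xmap 5 3) (F 0) ∧ F 3 = W3 ∧ F 4 = W4}
      {L : Submodule ℂ (V 5 3) | L ≤ W2 ∧ Module.finrank ℂ L = 1} := by
    refine ⟨?_, ?_, ?_⟩
    · rintro F ⟨hflag, _, h2, _, _⟩
      exact ⟨(forward hflag h2).1, hflag.1 1 (by norm_num)⟩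
    · rintro F ⟨hFflag, _, hF2, hF3, hF4⟩ G ⟨hGflag, _, hG2, hG3, hG4⟩ h1
      have hF2' := (forward hFflag hF2).2
      have hG2' := (forward hGflag hG2).2
      exact flag_ext hFflag hGflag h1 (hF2'.trans hG2'.symm) (hF3.trans hG3.symm)
        (hF4.trans hG4.symm)
    · rintro L ⟨hle, hr⟩
      have hflag : IsFlag 5 3 (Fc L) := Fc_flag hle hr
      have hmem : Fc L ∈ {F : ℕ → Submodule ℂ (V 5 3) | IsFlag 5 3 F ∧
          F 1 ≤ W2 ∧ F 2 = W2 ∧ F 3 = W3 ∧ F 4 = W4} := by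
        refine ⟨hflag, ?_, rfl, rfl, rfl⟩
        exact hle
      rw [← hseteq] at hmem
      exact ⟨Fc L, hmem, rfl⟩
  exact ⟨hseteq, hbij,
    ⟨(Set.BijOn.equiv _ hbij).trans (E2.trans
      (Projectivization.equivSubmodule ℂ (Fin 2 → ℂ)).symm)⟩⟩
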